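/- arXiv:2309.17326 — 2 statements merged into one kernel-verified Lean document; each statement's English description precedes it below -/
import Mathlib

section
/- Let u : (0,2π) → ℝ be measurable with θ ↦ exp(u(θ)) Lebesgue-integrable and set I = ∫₀^{2π} exp(u) dθ. Let f : (0,2π) → ℝ be measurable with f ≥ 0 almost everywhere, ρ := ∫₀^{2π} f dθ ≤ 1, and assume θ ↦ u(θ)f(θ) and θ ↦ f(θ)log f(θ) are integrable (with the convention 0·log 0 = 0). Then ∫₀^{2π} u f dθ − ∫₀^{2π} f log f dθ − (1−ρ)log(1−ρ) ≤ log(1+I), where (1−ρ)log(1−ρ) is interpreted as 0 when ρ = 1. -/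
open MeasureTheory Real Set

lemma ptwise_fy (a t c : ℝ) (ht : 0 ≤ t) (hc : 0 < c) :
    a * t - t * Real.log t ≤ Real.exp a / c - t + t * Real.log c := by
  rcases ht.eq_or_lt with rfl | ht
  · simp
    positivity
  · have hx : 0 < Real.exp a / (c * t) := by positivity
    have key := Real.log_le_sub_one_of_pos hx
    have hlog : Real.log (Real.exp a / (c * t)) = a - (Real.log c + Real.log t) := by
      rw [Real.log_div (Real.exp_ne_zero a) (by positivity), Real.log_exp,
        Real.log_mul hc.ne' ht.ne']
    rw [hlog] at key
    have h2 : t * (a - (Real.log c + Real.log t)) ≤ t * (Real.exp a / (c * t) - 1) :=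
      mul_le_mul_of_nonneg_left key ht.le
    have h3 : t * (Real.exp a / (c * t)) = Real.exp a / c := by
      field_simp
    nlinarith [h3]

lemma scalar_fy (ρ I : ℝ) (hρ1 : ρ ≤ 1) (hI : 0 ≤ I) :
    I / (1 + I) - ρ + ρ * Real.log (1 + I) - (1 - ρ) * Real.log (1 - ρ)
      ≤ Real.log (1 + I) := by
  have h1I : (0:ℝ) < 1 + I := by linarith
  set s := 1 - ρ with hs
  rcases (by linarith : (0:ℝ) ≤ s).eq_or_lt with h0 | h0
  · have hρ : ρ = 1 := by linarith [h0]
    rw [← h0, hρ]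
    simp
    rw [div_le_one h1I]; linarith
  · have hx : 0 < 1 / ((1 + I) * s) := by positivity
    have key := Real.log_le_sub_one_of_pos hx
    have hlog : Real.log (1 / ((1 + I) * s)) = -(Real.log (1 + I) + Real.log s) := by
      rw [Real.log_div one_ne_zero (by positivity), Real.log_one,
        Real.log_mul h1I.ne' h0.ne']
      ring
    rw [hlog] at key
    have h2 : s * (-(Real.log (1 + I) + Real.log s)) ≤ s * (1 / ((1 + I) * s) - 1) :=
      mul_le_mul_of_nonneg_left key h0.le
    have h3 : s * (1 / ((1 + I) * s)) = 1 / (1 + I) := by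
      field_simp
    have h4 : I / (1 + I) = 1 - 1 / (1 + I) := by
      field_simp; ring
    have hρs : ρ = 1 - s := by rw [hs]; ring
    nlinarith [h2, h3, h4]

/-- fiberwise Fenchel–Young inequality for the entropy density.
`∫₀^{2π} u f dθ − ∫₀^{2π} f log f dθ − (1−ρ) log(1−ρ) ≤ log (1 + ∫₀^{2π} e^u dθ)`.
(In Lean `Real.log 0 = 0`, so the conventions `0 · log 0 = 0` and
`(1−ρ)log(1−ρ) = 0` when `ρ = 1` hold automatically.) -/
theorem stmt_3 (u : ℝ → ℝ) (hu : Measurable u)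
    (hexp : IntegrableOn (fun θ => Real.exp (u θ)) (Ioo 0 (2 * π)))
    (I : ℝ) (hI : I = ∫ θ in Ioo 0 (2 * π), Real.exp (u θ))
    (f : ℝ → ℝ) (hf : Measurable f)
    (hf0 : ∀ᵐ θ : ℝ ∂(volume.restrict (Ioo 0 (2 * π))), 0 ≤ f θ)
    (hfint : IntegrableOn f (Ioo 0 (2 * π)))
    (ρ : ℝ) (hρ : ρ = ∫ θ in Ioo 0 (2 * π), f θ) (hρ1 : ρ ≤ 1)
    (huf : IntegrableOn (fun θ => u θ * f θ) (Ioo 0 (2 * π)))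
    (hflogf : IntegrableOn (fun θ => f θ * Real.log (f θ)) (Ioo 0 (2 * π))) :
    (∫ θ in Ioo 0 (2 * π), u θ * f θ) - (∫ θ in Ioo 0 (2 * π), f θ * Real.log (f θ))
        - (1 - ρ) * Real.log (1 - ρ) ≤ Real.log (1 + I) := by
  have hI0 : 0 ≤ I := by
    rw [hI]
    exact setIntegral_nonneg measurableSet_Ioo fun x _ => (Real.exp_pos _).le
  have h1I : (0:ℝ) < 1 + I := by linarith
  -- pointwise bound a.e.
  have hptwise : ∀ᵐ θ ∂(volume.restrict (Ioo 0 (2 * π))),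
      u θ * f θ - f θ * Real.log (f θ)
        ≤ Real.exp (u θ) / (1 + I) - f θ + f θ * Real.log (1 + I) := by
    filter_upwards [hf0] with θ hθ
    exact ptwise_fy (u θ) (f θ) (1 + I) hθ h1I
  -- integrability of both sides
  have hL : Integrable (fun θ => u θ * f θ - f θ * Real.log (f θ))
      (volume.restrict (Ioo 0 (2 * π))) := huf.sub hflogf
  have hR1 : Integrable (fun θ => Real.exp (u θ) / (1 + I) - f θ)
      (volume.restrict (Ioo 0 (2 * π))) := (hexp.div_const (1 + I)).sub hfint
  have hR2 : Integrable (fun θ => f θ * Real.log (1 + I))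
      (volume.restrict (Ioo 0 (2 * π))) := hfint.mul_const _
  have hR : Integrable (fun θ => Real.exp (u θ) / (1 + I) - f θ + f θ * Real.log (1 + I))
      (volume.restrict (Ioo 0 (2 * π))) := hR1.add hR2
  have hmono := integral_mono_ae hL hR hptwise
  rw [integral_sub huf hflogf] at hmono
  rw [integral_add hR1 hR2, integral_sub (hexp.div_const (1 + I)) hfint, integral_div,
    integral_mul_const] at hmono
  rw [← hI, ← hρ] at hmono
  have := scalar_fy ρ I hρ1 hI0
  linarith
end

section
/- Let u : (0,2π) → ℝ be measurable with θ ↦ exp(u(θ)) and θ ↦ |u(θ)|exp(u(θ)) Lebesgue-integrable, set I = ∫₀^{2π} exp(u) dθ, f*(θ) = exp(u(θ))/(1+I), and ρ* = ∫₀^{2π} f* dθ = I/(1+I). Then ∫₀^{2π} u f* dθ − ∫₀^{2π} f* log f* dθ − (1−ρ*)log(1−ρ*) = log(1+I). -/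
open MeasureTheory Real Set

/-- attainment of the fiberwise Legendre transform of the entropy density at
`f* = e^u/(1+I)` with `I = ∫₀^{2π} e^u dθ`, `ρ* = ∫₀^{2π} f* dθ = I/(1+I)`:
`∫₀^{2π} u f* dθ − ∫₀^{2π} f* log f* dθ − (1−ρ*) log(1−ρ*) = log (1+I)`. -/
theorem stmt_4 (u : ℝ → ℝ) (hu : Measurable u)
    (hexp : IntegrableOn (fun θ => Real.exp (u θ)) (Ioo 0 (2 * π)))
    (huexp : IntegrableOn (fun θ => |u θ| * Real.exp (u θ)) (Ioo 0 (2 * π)))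
    (I : ℝ) (hI : I = ∫ θ in Ioo 0 (2 * π), Real.exp (u θ))
    (fStar : ℝ → ℝ) (hfStar : ∀ θ, fStar θ = Real.exp (u θ) / (1 + I))
    (ρStar : ℝ) (hρStar : ρStar = ∫ θ in Ioo 0 (2 * π), fStar θ) :
    ρStar = I / (1 + I) ∧
      (∫ θ in Ioo 0 (2 * π), u θ * fStar θ)
          - (∫ θ in Ioo 0 (2 * π), fStar θ * Real.log (fStar θ))
          - (1 - ρStar) * Real.log (1 - ρStar) = Real.log (1 + I) := by
  have hInn : 0 ≤ I := by
    rw [hI]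
    exact integral_nonneg fun θ => (Real.exp_pos _).le
  have h1I : (0:ℝ) < 1 + I := by linarith
  have h1I' : (1:ℝ) + I ≠ 0 := ne_of_gt h1I
  -- integrability of u * exp u
  have hue : IntegrableOn (fun θ => u θ * Real.exp (u θ)) (Ioo 0 (2 * π)) := by
    refine huexp.mono' ((hu.mul (Real.measurable_exp.comp hu)).aestronglyMeasurable) ?_
    filter_upwards with θ
    rw [norm_mul, Real.norm_eq_abs, Real.norm_eq_abs, abs_of_pos (Real.exp_pos _)]
  set A := ∫ θ in Ioo 0 (2 * π), u θ * Real.exp (u θ) with hA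
  set c := Real.log (1 + I) with hc
  have hrho : ρStar = I / (1 + I) := by
    rw [hρStar]
    simp only [hfStar]
    rw [integral_div, ← hI]
  have h1 : (∫ θ in Ioo 0 (2 * π), u θ * fStar θ) = A / (1 + I) := by
    rw [hA, ← integral_div]
    congr 1 with θ
    rw [hfStar, mul_div_assoc]
  have hlogf : ∀ θ, Real.log (fStar θ) = u θ - c := by
    intro θ
    rw [hfStar, Real.log_div (Real.exp_ne_zero _) h1I', Real.log_exp]
  have h2 : (∫ θ in Ioo 0 (2 * π), fStar θ * Real.log (fStar θ))
      = (A - c * I) / (1 + I) := by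
    have : (∫ θ in Ioo 0 (2 * π), fStar θ * Real.log (fStar θ))
        = ∫ θ in Ioo 0 (2 * π), (u θ * Real.exp (u θ) - c * Real.exp (u θ)) / (1 + I) := by
      congr 1 with θ
      rw [hlogf θ, hfStar]
      field_simp
    rw [this, integral_div, integral_sub hue (hexp.const_mul c), integral_const_mul, ← hI, ← hA]
  rw [hrho] at *
  refine ⟨rfl, ?_⟩
  rw [h1, h2]
  have h1sub : 1 - I / (1 + I) = 1 / (1 + I) := by field_simp; ring
  rw [h1sub, Real.log_div one_ne_zero h1I', Real.log_one, ← hc]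
  field_simp
  ring
end
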